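/- Let Σ_w be symmetric positive definite and S symmetric positive semidefinite, both m×m, and H ∈ ℝ^{m×n} with Hᵀ S H invertible. Then Σ_PPCR := (Hᵀ S^{1/2}(S^{1/2}Σ_w S^{1/2}+I)^{-1}S^{1/2}H)^{-1} ≥ (Hᵀ S H)^{-1} in the Loewner order, with equality iff S^{1/2}Σ_w S^{1/2} vanishes on the range of S^{1/2}H. In particular the privacy-preserving CR lower bound is never smaller than the noiseless-measurement bound (Hᵀ S H)^{-1}. -/

import Mathlib

open Matrix

/-- The positive semidefinite square root of a positive semidefinite matrix, as defined in
Mathlib (December 2024); it has since been removed from Mathlib. -/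
noncomputable def Matrix.PosSemidef.sqrt {n 𝕜 : Type*} [Fintype n] [DecidableEq n] [RCLike 𝕜]
    [PartialOrder 𝕜]     {A : Matrix n n 𝕜} (hA : A.PosSemidef) : Matrix n n 𝕜 :=
  hA.1.eigenvectorUnitary.1 * diagonal ((↑) ∘ (√·) ∘ hA.1.eigenvalues) *
  (star hA.1.eigenvectorUnitary : Matrix n n 𝕜)

lemma Matrix.PosSemidef.sqrt_mul_self {n : Type*} [Fintype n] [DecidableEq n]
    {A : Matrix n n ℝ} (hA : A.PosSemidef) : hA.sqrt * hA.sqrt = A := by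
  have hU := Unitary.coe_star_mul_self hA.1.eigenvectorUnitary
  have hspec := hA.1.spectral_theorem
  unfold Matrix.PosSemidef.sqrt
  simp only [Matrix.mul_assoc]
  rw [← Matrix.mul_assoc (star _) _ (_ * star _), hU, Matrix.one_mul,
    ← Matrix.mul_assoc (diagonal _), diagonal_mul_diagonal]
  conv_rhs => rw [hspec]
  simp only [Unitary.conjStarAlgAut_apply, Matrix.mul_assoc]
  congr 3
  funext i
  simp [Real.mul_self_sqrt (hA.eigenvalues_nonneg i)]

lemma Matrix.PosSemidef.posSemidef_sqrt {n : Type*} [Fintype n] [DecidableEq n]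
    {A : Matrix n n ℝ} (hA : A.PosSemidef) : hA.sqrt.PosSemidef := by
  unfold Matrix.PosSemidef.sqrt
  have hd : (diagonal (((↑) ∘ (√·) ∘ hA.1.eigenvalues) : n → ℝ)).PosSemidef :=
    PosSemidef.diagonal (fun i => by simp [Real.sqrt_nonneg])
  exact hd.mul_mul_conjTranspose_same (hA.1.eigenvectorUnitary : Matrix n n ℝ)

section Aux
variable {k : Type*} [Fintype k] [DecidableEq k]

lemma aux_posDef_of_unit {A : Matrix k k ℝ} (hA : A.PosSemidef) (hu : IsUnit A) : A.PosDef := by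
  refine posDef_iff_dotProduct_mulVec.mpr ⟨hA.isHermitian, fun x hx => ?_⟩
  rcases ((posSemidef_iff_dotProduct_mulVec.mp hA).2 x).lt_or_eq with h | h
  · exact h
  · exfalso
    have h0 : A *ᵥ x = 0 := (hA.dotProduct_mulVec_zero_iff x).mp h.symm
    have : x = 0 := by
      have := congrArg (fun v => A⁻¹ *ᵥ v) h0
      simpa [Matrix.mulVec_mulVec,
        Matrix.nonsing_inv_mul A ((Matrix.isUnit_iff_isUnit_det A).mp hu)] using this
    exact hx this
/-- If `X` is positive definite and `1 - X ≥ 0` then `X⁻¹ - 1 ≥ 0`. -/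
lemma aux_inv_sub_one {X : Matrix k k ℝ} (hX : X.PosDef) (h1 : (1 - X).PosSemidef) :
    (X⁻¹ - 1).PosSemidef := by
  set E := h1.sqrt with hEdef
  have hEE : E * E = 1 - X := h1.sqrt_mul_self
  have hEH : Eᴴ = E := h1.posSemidef_sqrt.isHermitian
  have hXd : IsUnit X.det := (Matrix.isUnit_iff_isUnit_det X).mp hX.isUnit
  have hXi : X * X⁻¹ = 1 := Matrix.mul_nonsing_inv X hXd
  have hiX : X⁻¹ * X = 1 := Matrix.nonsing_inv_mul X hXd
  have hiH : (X⁻¹)ᴴ = X⁻¹ := hX.inv.isHermitian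
  have hXE : X = 1 - E * E := by rw [hEE]; abel
  have hmid : E * X * E = (1 - X) - (1 - X) * (1 - X) := by
    rw [← hEE]
    calc E * X * E = E * (1 - E * E) * E := by rw [← hXE]
    _ = E * E - E * E * (E * E) := by noncomm_ring
  have key : X⁻¹ - 1 = (X⁻¹)ᴴ * (E * X * E) * X⁻¹ := by
    rw [hiH, hmid]
    have : (1 - X) - (1 - X) * (1 - X) = (1 - X) * X := by noncomm_ring
    rw [this, show X⁻¹ * ((1 - X) * X) * X⁻¹ = X⁻¹ * (1 - X) * (X * X⁻¹) by noncomm_ring, hXi,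
      mul_one, mul_sub, hiX, mul_one]
  rw [key]
  have : (E * X * E).PosSemidef := by
    have := hX.posSemidef.conjTranspose_mul_mul_same E
    rwa [hEH] at this
  exact this.conjTranspose_mul_mul_same X⁻¹

/-- If `X` is positive definite and `X - 1 ≥ 0` then `1 - X⁻¹ ≥ 0`. -/
lemma aux_one_sub_inv {X : Matrix k k ℝ} (hX : X.PosDef) (h1 : (X - 1).PosSemidef) :
    (1 - X⁻¹).PosSemidef := by
  set G := h1.sqrt with hGdef
  have hGG : G * G = X - 1 := h1.sqrt_mul_self
  have hGH : Gᴴ = G := h1.posSemidef_sqrt.isHermitian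
  have hXd : IsUnit X.det := (Matrix.isUnit_iff_isUnit_det X).mp hX.isUnit
  have hXi : X * X⁻¹ = 1 := Matrix.mul_nonsing_inv X hXd
  have hiX : X⁻¹ * X = 1 := Matrix.nonsing_inv_mul X hXd
  have hiH : (X⁻¹)ᴴ = X⁻¹ := hX.inv.isHermitian
  have hXG : X = 1 + G * G := by rw [hGG]; abel
  have hmid : G * X * G = (X - 1) + (X - 1) * (X - 1) := by
    rw [← hGG]
    calc G * X * G = G * (1 + G * G) * G := by rw [← hXG]
    _ = G * G + G * G * (G * G) := by noncomm_ring
  have key : 1 - X⁻¹ = (X⁻¹)ᴴ * (G * X * G) * X⁻¹ := by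
    rw [hiH, hmid]
    have : (X - 1) + (X - 1) * (X - 1) = (X - 1) * X := by noncomm_ring
    rw [this, show X⁻¹ * ((X - 1) * X) * X⁻¹ = X⁻¹ * (X - 1) * (X * X⁻¹) by noncomm_ring, hXi,
      mul_one, mul_sub, hiX, mul_one]
  rw [key]
  have : (G * X * G).PosSemidef := by
    have := hX.posSemidef.conjTranspose_mul_mul_same G
    rwa [hGH] at this
  exact this.conjTranspose_mul_mul_same X⁻¹

end Aux


/-- `Σ_PPCR ≥ (HᵀSH)⁻¹` in the Loewner order, with equality iff
`S^{1/2}Σ_w S^{1/2}` vanishes on the range of `S^{1/2}H`. -/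
theorem stmt_19 {m n : ℕ} (H : Matrix (Fin m) (Fin n) ℝ)
    (S Sw : Matrix (Fin m) (Fin m) ℝ)
    (hS : S.PosSemidef) (hSw : Sw.PosDef)
    (hinv : IsUnit (Hᵀ * S * H)) :
    ((Hᵀ * hS.sqrt * (hS.sqrt * Sw * hS.sqrt + 1)⁻¹ * hS.sqrt * H)⁻¹
        - (Hᵀ * S * H)⁻¹).PosSemidef ∧
    ((Hᵀ * hS.sqrt * (hS.sqrt * Sw * hS.sqrt + 1)⁻¹ * hS.sqrt * H)⁻¹ = (Hᵀ * S * H)⁻¹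
      ↔ ∀ x : Fin n → ℝ,
          (hS.sqrt * Sw * hS.sqrt).mulVec (hS.sqrt.mulVec (H.mulVec x)) = 0) := by
  set R := hS.sqrt with hRdef
  have hRR : R * R = S := hS.sqrt_mul_self
  have hRH : Rᴴ = R := hS.posSemidef_sqrt.isHermitian
  set A := R * Sw * R with hAdef
  have hApsd : A.PosSemidef := by
    have := hSw.posSemidef.conjTranspose_mul_mul_same R
    rwa [hRH] at this
  set B := A + 1 with hBdef
  have hBpd : B.PosDef := Matrix.PosDef.posSemidef_add hApsd Matrix.PosDef.one
  have hBd : IsUnit B.det := (Matrix.isUnit_iff_isUnit_det B).mp hBpd.isUnit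
  have hBiB : B⁻¹ * B = 1 := Matrix.nonsing_inv_mul B hBd
  have hBBi : B * B⁻¹ = 1 := Matrix.mul_nonsing_inv B hBd
  have hBipd : B⁻¹.PosDef := hBpd.inv
  set K := R * H with hKdef
  have hHT : Hᴴ = Hᵀ := by ext i j; simp [conjTranspose_apply]
  have hKH : Hᵀ * R = Kᴴ := by rw [hKdef, conjTranspose_mul, hRH, hHT]
  have hMeq : Hᵀ * R * B⁻¹ * R * H = Kᴴ * B⁻¹ * K := by
    simp only [← hKH, hKdef, Matrix.mul_assoc]
    rw [conjTranspose_mul, hRH, hHT, Matrix.mul_assoc]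
  have hNeq : Hᵀ * S * H = Kᴴ * K := by
    rw [← hKH, ← hRR, hKdef]; simp only [Matrix.mul_assoc]
  rw [hNeq] at hinv
  rw [hMeq, hNeq]
  set Mx := Kᴴ * B⁻¹ * K with hMxdef
  set Nx := Kᴴ * K with hNxdef
  have hNpsd : Nx.PosSemidef := posSemidef_conjTranspose_mul_self K
  have hNpd : Nx.PosDef := aux_posDef_of_unit hNpsd hinv
  have hNd : IsUnit Nx.det := (Matrix.isUnit_iff_isUnit_det Nx).mp hinv
  have hNNi : Nx * Nx⁻¹ = 1 := Matrix.mul_nonsing_inv Nx hNd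
  have hKinj : ∀ x, K *ᵥ x = 0 → x = 0 := by
    intro x hx
    have h0 : Nx *ᵥ x = 0 := by rw [hNxdef, ← mulVec_mulVec, hx, mulVec_zero]
    have := congrArg (fun v => Nx⁻¹ *ᵥ v) h0
    simpa [Matrix.mulVec_mulVec, Matrix.nonsing_inv_mul Nx hNd] using this
  have hMpsd : Mx.PosSemidef := hBipd.posSemidef.conjTranspose_mul_mul_same K
  have hMpd : Mx.PosDef := by
    refine posDef_iff_dotProduct_mulVec.mpr ⟨hMpsd.isHermitian, fun x hx => ?_⟩
    have hKx : K *ᵥ x ≠ 0 := fun h => hx (hKinj x h)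
    have := (posDef_iff_dotProduct_mulVec.mp hBipd).2 hKx
    simpa only [star_mulVec, dotProduct_mulVec, vecMul_vecMul] using this
  have hMd : IsUnit Mx.det := (Matrix.isUnit_iff_isUnit_det Mx).mp hMpd.isUnit
  have hB1 : B - 1 = A := by rw [hBdef]; abel
  have hDpsd : (1 - B⁻¹).PosSemidef := by
    have hB1psd : (B - 1).PosSemidef := by rw [hB1]; exact hApsd
    exact aux_one_sub_inv hBpd hB1psd
  have hNM : Nx - Mx = Kᴴ * (1 - B⁻¹) * K := by
    rw [hNxdef, hMxdef, Matrix.mul_sub, Matrix.sub_mul, Matrix.mul_one]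
  have hNMpsd : (Nx - Mx).PosSemidef := by
    rw [hNM]; exact hDpsd.conjTranspose_mul_mul_same K
  constructor
  · -- Loewner inequality
    have hNipd : Nx⁻¹.PosDef := hNpd.inv
    set P := hNipd.posSemidef.sqrt with hPdef
    have hPP : P * P = Nx⁻¹ := hNipd.posSemidef.sqrt_mul_self
    have hPH : Pᴴ = P := hNipd.posSemidef.posSemidef_sqrt.isHermitian
    have hPu : IsUnit P := by
      have h1 : IsUnit (P.det * P.det) := by
        rw [← det_mul, hPP]
        exact (Matrix.isUnit_iff_isUnit_det _).mp hNipd.isUnit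
      exact (Matrix.isUnit_iff_isUnit_det P).mpr (isUnit_of_mul_isUnit_left h1)
    have hPd : IsUnit P.det := (Matrix.isUnit_iff_isUnit_det P).mp hPu
    have hPPi : P * P⁻¹ = 1 := Matrix.mul_nonsing_inv P hPd
    have hPiP : P⁻¹ * P = 1 := Matrix.nonsing_inv_mul P hPd
    set X := P * Mx * P with hXdef
    have hXpsd : X.PosSemidef := by
      have := hMpsd.conjTranspose_mul_mul_same P
      rwa [hPH] at this
    have hXu : IsUnit X := (hPu.mul hMpd.isUnit).mul hPu
    have hXpd : X.PosDef := aux_posDef_of_unit hXpsd hXu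
    have hY1 : P * Nx * P = 1 := by
      have hYY : (P * Nx * P) * (P * Nx * P) = (P * Nx * P) * 1 := by
        calc (P * Nx * P) * (P * Nx * P) = P * Nx * (P * P) * Nx * P := by noncomm_ring
        _ = P * (Nx * Nx⁻¹) * Nx * P := by rw [hPP]; noncomm_ring
        _ = (P * Nx * P) * 1 := by rw [hNNi]; noncomm_ring
      have hYu : IsUnit (P * Nx * P) := (hPu.mul hinv).mul hPu
      exact (hYu.mul_left_cancel hYY).symm ▸ rfl
    have h1X : (1 - X).PosSemidef := by
      have heq : Pᴴ * (Nx - Mx) * P = 1 - X := by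
        rw [hPH, hXdef, ← hY1]; noncomm_ring
      rw [← heq]
      exact hNMpsd.conjTranspose_mul_mul_same P
    have hXinv : (X⁻¹ - 1).PosSemidef := aux_inv_sub_one hXpd h1X
    have hXiv : X⁻¹ = P⁻¹ * (Mx⁻¹ * P⁻¹) := by
      rw [hXdef, Matrix.mul_inv_rev, Matrix.mul_inv_rev]
    have key : Mx⁻¹ - Nx⁻¹ = Pᴴ * (X⁻¹ - 1) * P := by
      rw [hPH]
      calc Mx⁻¹ - Nx⁻¹ = (P * P⁻¹) * Mx⁻¹ * (P⁻¹ * P) - Nx⁻¹ := by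
            rw [hPPi, hPiP, one_mul, mul_one]
      _ = P * (P⁻¹ * (Mx⁻¹ * P⁻¹)) * P - P * P := by rw [hPP]; noncomm_ring
      _ = P * (X⁻¹ - 1) * P := by rw [hXiv]; noncomm_ring
    rw [key]
    exact hXinv.conjTranspose_mul_mul_same P
  · constructor
    · intro h x
      have hMN : Mx = Nx := by
        rw [← Matrix.nonsing_inv_nonsing_inv Mx hMd, h, Matrix.nonsing_inv_nonsing_inv Nx hNd]
      have h0 : Kᴴ * (1 - B⁻¹) * K = 0 := by rw [← hNM, hMN, sub_self]
      have hq2 : star (K *ᵥ x) ⬝ᵥ (1 - B⁻¹) *ᵥ (K *ᵥ x) = 0 := by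
        have : star x ⬝ᵥ (Kᴴ * (1 - B⁻¹) * K) *ᵥ x = 0 := by rw [h0]; simp
        rw [← this]
        simp only [star_mulVec, dotProduct_mulVec, vecMul_vecMul]
      have hv0 : (1 - B⁻¹) *ᵥ (K *ᵥ x) = 0 := (hDpsd.dotProduct_mulVec_zero_iff _).mp hq2
      have hBv : B⁻¹ *ᵥ (K *ᵥ x) = K *ᵥ x := by
        rw [sub_mulVec, one_mulVec, sub_eq_zero] at hv0
        exact hv0.symm
      have hBv2 : B *ᵥ (K *ᵥ x) = K *ᵥ x := by
        conv_lhs => rw [← hBv]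
        rw [mulVec_mulVec, hBBi, one_mulVec]
      have hAv : A *ᵥ (K *ᵥ x) = 0 := by
        rw [hBdef, add_mulVec, one_mulVec, add_eq_right] at hBv2
        exact hBv2
      rw [Matrix.mulVec_mulVec x R H]
      exact hAv
    · intro h
      have h' : ∀ x, (A * K) *ᵥ x = 0 := by
        intro x
        rw [← Matrix.mulVec_mulVec x A K, hKdef, ← Matrix.mulVec_mulVec x R H]
        exact h x
      have hAK : A * K = 0 := by
        ext i j
        have := congrFun (h' (Pi.single j 1)) i
        simpa [mulVec_single] using this
      have hBK1 : B * K = K := by rw [hBdef, Matrix.add_mul, Matrix.one_mul, hAK, zero_add]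
      have hBK : B⁻¹ * K = K := by
        calc B⁻¹ * K = B⁻¹ * (B * K) := by rw [hBK1]
        _ = K := by rw [← Matrix.mul_assoc, hBiB, Matrix.one_mul]
      have : Mx = Nx := by rw [hMxdef, Matrix.mul_assoc, hBK, hNxdef]
      rw [this]
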